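/- arXiv:1603.08082 — 2 statements merged into one kernel-verified Lean document; each statement's English description precedes it below -/
import Mathlib

section
/- Let X and Y be Banach spaces each having the diametral strong diameter 2 property (DSD2P). Then the direct sum X ⊕_1 Y equipped with the norm ‖(x,y)‖ = ‖x‖ + ‖y‖ also has the DSD2P. -/
/-- `U` is a relatively weakly open subset of the closed unit ball of `X`. -/
def RelWeakOpen {X : Type*} [NormedAddCommGroup X] [NormedSpace ℝ X] (U : Set X) : Prop :=
  U ⊆ Metric.closedBall 0 1 ∧
    ∀ a ∈ U, ∃ (m : ℕ) (f : Fin m → (X →L[ℝ] ℝ)) (δ : ℝ), 0 < δ ∧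
      ∀ b ∈ Metric.closedBall (0 : X) 1, (∀ j, |f j b - f j a| < δ) → b ∈ U

/-- The convex combination `∑ λᵢ Uᵢ` of sets, as a set. -/
def combo {X : Type*} [NormedAddCommGroup X] [NormedSpace ℝ X]
    {n : ℕ} (lam : Fin n → ℝ) (U : Fin n → Set X) : Set X :=
  {w : X | ∃ u : Fin n → X, (∀ i, u i ∈ U i) ∧ w = ∑ i, lam i • u i}

/-- The diametral strong diameter 2 property. -/
def DSD2P (X : Type*) [NormedAddCommGroup X] [NormedSpace ℝ X] : Prop :=
  ∀ (n : ℕ) (U : Fin n → Set X), (∀ i, (U i).Nonempty) → (∀ i, RelWeakOpen (U i)) →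
    ∀ lam : Fin n → ℝ, (∀ i, lam i ∈ Set.Icc (0 : ℝ) 1) → ∑ i, lam i = 1 →
    ∀ x ∈ combo lam U, ∀ ε > (0 : ℝ), ∃ u ∈ combo lam U, ‖x - u‖ ≥ ‖x‖ + 1 - ε


/-! Write `uᵢ = (xᵢ, yᵢ)` and split the unit mass of each point as `1 = (1 - ‖yᵢ‖) + ‖yᵢ‖`.
By homogeneity the DSD2P also holds for nonnegative weights of any total mass `s`, with gain
`s (1 - ε)`, and for points of balls of radius `rᵢ` (gain `∑ λᵢ rᵢ (1 - ε)`). Apply this in `X` to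
the `xᵢ` with radii `1 - ‖yᵢ‖` and in `Y` to the `yᵢ` with radii `‖yᵢ‖`. The new pairs `(vᵢ, wᵢ)`
lie in the unit ball of `X ⊕₁ Y`, are weakly close to `uᵢ` because a functional on the sum is the
sum of its restrictions, and the two gains add up to `1 - ε` in the `ℓ¹` norm. -/

open Finset

lemma relWeakOpen_setOf_abs_sub_lt {X : Type*} [NormedAddCommGroup X] [NormedSpace ℝ X]
    {m : ℕ} (φ : Fin m → X →L[ℝ] ℝ) (t s : Fin m → ℝ) :
    RelWeakOpen {v : X | v ∈ Metric.closedBall 0 1 ∧ ∀ j, |φ j v - t j| < s j} := by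
  refine ⟨fun v hv => hv.1, fun a ha => ?_⟩
  have hδ : ∀ᶠ δ in nhdsWithin (0 : ℝ) (Set.Ioi 0), 0 < δ ∧ ∀ j, δ < s j - |φ j a - t j| :=
    eventually_mem_nhdsWithin.and <| Filter.eventually_all.2 fun j =>
      nhdsWithin_le_nhds (eventually_lt_nhds (sub_pos.2 (ha.2 j)))
  obtain ⟨δ, hδpos, hδ⟩ := hδ.exists
  refine ⟨m, φ, δ, hδpos, fun b hb hba => ⟨hb, fun j => ?_⟩⟩
  linarith [abs_sub_le (φ j b) (φ j a) (t j), hba j, hδ j]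

section DSD2P

variable {Z : Type*} [NormedAddCommGroup Z] [NormedSpace ℝ Z]

theorem DSD2P.exists_far_of_nonneg_weights (hZ : DSD2P Z) {n : ℕ} {V : Fin n → Set Z}
    (hV : ∀ i, RelWeakOpen (V i)) {p : Fin n → Z} (hp : ∀ i, p i ∈ V i) {κ : Fin n → ℝ}
    (hκ : ∀ i, 0 ≤ κ i) {ε : ℝ} (hε : 0 < ε) :
    ∃ v : Fin n → Z, (∀ i, v i ∈ V i) ∧
      ‖∑ i, κ i • p i‖ + (∑ i, κ i) * (1 - ε) ≤ ‖∑ i, κ i • p i - ∑ i, κ i • v i‖ := by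
  obtain hs | hs := (sum_nonneg fun i _ => hκ i : 0 ≤ ∑ i, κ i).eq_or_lt
  · have hκ0 : ∀ i, κ i = 0 := fun i =>
      (sum_eq_zero_iff_of_nonneg fun i _ => hκ i).1 hs.symm i (mem_univ i)
    exact ⟨p, hp, by simp [hκ0]⟩
  set s := ∑ i, κ i
  have hμ : ∀ i, κ i / s ∈ Set.Icc (0 : ℝ) 1 := fun i =>
    ⟨div_nonneg (hκ i) hs.le,
      div_le_one_of_le₀ (single_le_sum (fun j _ => hκ j) (mem_univ i)) hs.le⟩
  have hμ_sum : ∑ i, κ i / s = 1 := by rw [← sum_div, div_self hs.ne']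
  obtain ⟨_, ⟨v, hv, rfl⟩, hfar⟩ :=
    hZ n V (fun i => ⟨p i, hp i⟩) hV _ hμ hμ_sum _ ⟨p, hp, rfl⟩ ε hε
  refine ⟨v, hv, ?_⟩
  have hscale : ∀ w : Fin n → Z, ∑ i, κ i • w i = s • ∑ i, (κ i / s) • w i := fun w => by
    simp_rw [smul_sum, smul_smul, mul_div_cancel₀ _ hs.ne']
  rw [hscale p, hscale v, ← smul_sub, norm_smul, norm_smul, Real.norm_of_nonneg hs.le]
  linarith [mul_le_mul_of_nonneg_left hfar hs.le]

theorem DSD2P.exists_far_in_closedBalls (hZ : DSD2P Z) {n : ℕ} {lam r : Fin n → ℝ}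
    (hlam : ∀ i, 0 ≤ lam i) (hr : ∀ i, 0 ≤ r i) {a : Fin n → Z} (ha : ∀ i, ‖a i‖ ≤ r i)
    {m : Fin n → ℕ} (g : ∀ i, Fin (m i) → Z →L[ℝ] ℝ) {δ : Fin n → ℝ} (hδ : ∀ i, 0 < δ i)
    {ε : ℝ} (hε : 0 < ε) :
    ∃ v : Fin n → Z, (∀ i, ‖v i‖ ≤ r i) ∧ (∀ i j, |g i j (v i) - g i j (a i)| < δ i) ∧
      ‖∑ i, lam i • a i‖ + (∑ i, lam i * r i) * (1 - ε) ≤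
        ‖∑ i, lam i • a i - ∑ i, lam i • v i‖ := by
  have hrp : ∀ i, r i • (r i)⁻¹ • a i = a i := fun i => by
    obtain hri | hri := (hr i).eq_or_lt
    · rw [norm_le_zero_iff.1 ((ha i).trans_eq hri.symm), smul_zero, smul_zero]
    · rw [smul_smul, mul_inv_cancel₀ hri.ne', one_smul]
  let V : Fin n → Set Z := fun i =>
    {v | v ∈ Metric.closedBall 0 1 ∧ ∀ j, |(r i • g i j) v - g i j (a i)| < δ i}
  have hpV : ∀ i, (r i)⁻¹ • a i ∈ V i := fun i => by
    refine ⟨?_, fun j => ?_⟩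
    · rw [mem_closedBall_zero_iff, norm_smul, norm_inv, Real.norm_of_nonneg (hr i)]
      exact inv_mul_le_one_of_le₀ (ha i) (hr i)
    · rw [smul_apply, ← map_smul, hrp, sub_self, abs_zero]
      exact hδ i
  obtain ⟨v, hv, hfar⟩ := hZ.exists_far_of_nonneg_weights
    (fun i => relWeakOpen_setOf_abs_sub_lt _ _ _) hpV (fun i => mul_nonneg (hlam i) (hr i)) hε
  refine ⟨fun i => r i • v i, fun i => ?_, fun i j => ?_, ?_⟩
  · rw [norm_smul, Real.norm_of_nonneg (hr i)]
    exact mul_le_of_le_one_right (hr i) (mem_closedBall_zero_iff.1 (hv i).1)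
  · simpa only [smul_apply, map_smul] using (hv i).2 j
  · simpa only [mul_smul, hrp] using hfar

end DSD2P

namespace WithLp

section Sum

variable {p : ENNReal} {X Y : Type*} [AddCommGroup X] [AddCommGroup Y]

theorem fst_sum {ι : Type*} (s : Finset ι) (g : ι → WithLp p (X × Y)) :
    (∑ i ∈ s, g i).fst = ∑ i ∈ s, (g i).fst := by
  simp only [WithLp.fst, ofLp_sum, Prod.fst_sum]

theorem snd_sum {ι : Type*} (s : Finset ι) (g : ι → WithLp p (X × Y)) :
    (∑ i ∈ s, g i).snd = ∑ i ∈ s, (g i).snd := by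
  simp only [WithLp.snd, ofLp_sum, Prod.snd_sum]

end Sum

variable {p : ENNReal} {X Y : Type*} [NormedAddCommGroup X] [NormedSpace ℝ X]
  [NormedAddCommGroup Y] [NormedSpace ℝ Y]

variable (p X Y) in
noncomputable def inlL : X →L[ℝ] WithLp p (X × Y) :=
  (prodContinuousLinearEquiv p ℝ X Y).symm.toContinuousLinearMap.comp (.inl ℝ X Y)

variable (p X Y) in
noncomputable def inrL : Y →L[ℝ] WithLp p (X × Y) :=
  (prodContinuousLinearEquiv p ℝ X Y).symm.toContinuousLinearMap.comp (.inr ℝ X Y)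

theorem inlL_apply (x : X) : inlL p X Y x = toLp p (x, 0) := rfl

theorem inrL_apply (y : Y) : inrL p X Y y = toLp p (0, y) := rfl

theorem apply_eq_inlL_add_inrL (f : WithLp p (X × Y) →L[ℝ] ℝ) (z : WithLp p (X × Y)) :
    f z = f (inlL p X Y z.fst) + f (inrL p X Y z.snd) := by
  rw [← map_add, inlL_apply, inrL_apply, ← toLp_add, Prod.mk_add_mk, add_zero, zero_add]
  rfl

theorem abs_apply_sub_le (f : WithLp p (X × Y) →L[ℝ] ℝ) (z z' : WithLp p (X × Y)) :
    |f z' - f z| ≤ |f (inlL p X Y z'.fst) - f (inlL p X Y z.fst)| +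
      |f (inrL p X Y z'.snd) - f (inrL p X Y z.snd)| := by
  rw [apply_eq_inlL_add_inrL f z', apply_eq_inlL_add_inrL f z, add_sub_add_comm]
  exact abs_add_le _ _

end WithLp

theorem stmt6_general (X Y : Type*) [NormedAddCommGroup X] [NormedSpace ℝ X]
    [NormedAddCommGroup Y] [NormedSpace ℝ Y]
    (hX : DSD2P X) (hY : DSD2P Y) : DSD2P (WithLp 1 (X × Y)) := by
  rintro n U - hU lam hlam hsum _ ⟨u, hu, rfl⟩ ε hε
  choose m f δ hδ hnhds using fun i => (hU i).2 (u i) (hu i)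
  have hu_norm : ∀ i, ‖(u i).fst‖ + ‖(u i).snd‖ ≤ 1 := fun i => by
    simpa [WithLp.prod_norm_eq_of_L1] using (hU i).1 (hu i)
  obtain ⟨v, hv_norm, hv_near, hv_far⟩ := hX.exists_far_in_closedBalls
    (r := fun i => 1 - ‖(u i).snd‖) (fun i => (hlam i).1)
    (fun i => by linarith [hu_norm i, norm_nonneg (u i).fst]) (fun i => by linarith [hu_norm i])
    (fun i j => (f i j).comp (WithLp.inlL 1 X Y)) (fun i => half_pos (hδ i)) hε
  obtain ⟨w, hw_norm, hw_near, hw_far⟩ := hY.exists_far_in_closedBalls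
    (r := fun i => ‖(u i).snd‖) (fun i => (hlam i).1) (fun i => norm_nonneg _) (fun i => le_rfl)
    (fun i j => (f i j).comp (WithLp.inrL 1 X Y)) (fun i => half_pos (hδ i)) hε
  refine ⟨_, ⟨fun i => WithLp.toLp 1 (v i, w i),
    fun i => hnhds i (WithLp.toLp 1 (v i, w i)) ?_ fun j => ?_, rfl⟩, ?_⟩
  · simp only [mem_closedBall_zero_iff, WithLp.prod_norm_eq_of_L1, WithLp.toLp_fst,
      WithLp.toLp_snd]
    linarith [hv_norm i, hw_norm i]
  · have hf := WithLp.abs_apply_sub_le (f i j) (u i) (WithLp.toLp 1 (v i, w i))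
    simp only [ContinuousLinearMap.comp_apply, WithLp.toLp_fst, WithLp.toLp_snd]
      at hf hv_near hw_near
    linarith [hv_near i j, hw_near i j]
  · have hmass : ∑ i, lam i * (1 - ‖(u i).snd‖) + ∑ i, lam i * ‖(u i).snd‖ = 1 := by
      simp_rw [← sum_add_distrib, ← mul_add, sub_add_cancel, mul_one, hsum]
    simp only [WithLp.prod_norm_eq_of_L1, WithLp.sub_fst, WithLp.sub_snd, WithLp.fst_sum,
      WithLp.snd_sum, WithLp.smul_fst, WithLp.smul_snd, WithLp.toLp_fst, WithLp.toLp_snd]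
    linear_combination hv_far + hw_far + (ε - 1) * hmass

/-- The DSD2P is stable under 1-sums: if `X` and `Y` have the DSD2P, so does
`X ⊕₁ Y`, the product with the norm `‖(x,y)‖ = ‖x‖ + ‖y‖`. -/
theorem stmt6 (X Y : Type*) [NormedAddCommGroup X] [NormedSpace ℝ X] [CompleteSpace X]
    [NormedAddCommGroup Y] [NormedSpace ℝ Y] [CompleteSpace Y]
    (hX : DSD2P X) (hY : DSD2P Y) : DSD2P (WithLp 1 (X × Y)) :=
  stmt6_general X Y hX hY
end

section
/- Let X be an infinite-dimensional Banach space with the following property restricted to points of the sphere: for every n ∈ ℕ, convex nonempty relatively weakly open subsets U_1,…,U_n of B_X, λ_1,…,λ_n ∈ [0,1] with Σλ_i = 1, every point x of the form x = Σ λ_i x_i with x_i ∈ S_X ∩ U_i, and every ε > 0, there exists u ∈ Σ λ_i U_i with ‖x − u‖ ≥ ‖x‖ + 1 − ε. Then X has the full diametral strong diameter 2 property (i.e., the same conclusion holds for arbitrary x ∈ Σ λ_i U_i). -/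
/-!
A relatively weakly open set `U ⊆ B_X` contains, around each of its points `a`, a convex basic
weak neighbourhood `V` cut out by finitely many functionals. In infinite dimension these
functionals have a common nonzero kernel vector `v`, and the line `a + ℝ v` stays in `V` until it
leaves the ball, so `a` lies on a segment between two points of `S_X ∩ V`. Writing each
`aᵢ = μᵢ yᵢ + νᵢ zᵢ` in this way, `∑ λᵢ aᵢ` becomes a combination of sphere points with weights
`λᵢ μᵢ, λᵢ νᵢ` over the doubled family `V₁, …, Vₙ, V₁, …, Vₙ`, and convexity of `Vᵢ` folds any
`u` from the doubled combination back into `∑ λᵢ Vᵢ ⊆ ∑ λᵢ Uᵢ`.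
-/

open Metric Set

section

variable {X : Type*} [NormedAddCommGroup X] [NormedSpace ℝ X]

theorem exists_ne_zero_forall_eq_zero_of_not_finiteDimensional {𝕜 E ι : Type*} [Field 𝕜]
    [AddCommGroup E] [Module 𝕜 E] [Finite ι] (hE : ¬ FiniteDimensional 𝕜 E)
    (f : ι → E →ₗ[𝕜] 𝕜) : ∃ v ≠ 0, ∀ j, f j v = 0 := by
  by_contra! hf
  refine hE (Module.Finite.of_injective (LinearMap.pi f) ?_)
  rw [← LinearMap.ker_eq_bot, LinearMap.ker_eq_bot']
  intro v hv
  by_contra hv0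
  obtain ⟨j, hj⟩ := hf v hv0
  exact hj (congrFun hv j)

theorem exists_norm_add_smul_eq_one_mem_segment {a v : X} (ha : ‖a‖ ≤ 1) (hv : v ≠ 0) :
    ∃ s t : ℝ, ‖a + s • v‖ = 1 ∧ ‖a + t • v‖ = 1 ∧ a ∈ segment ℝ (a + s • v) (a + t • v) := by
  set T : ℝ := 2 / ‖v‖
  have hT : 0 < T := by positivity
  have hcont : Continuous fun r : ℝ => ‖a + r • v‖ := by fun_prop
  have h0 : ‖a + (0 : ℝ) • v‖ ≤ 1 := by simpa using ha
  have hfar : ∀ r : ℝ, |r| = T → 1 ≤ ‖a + r • v‖ := fun r hr => by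
    have : ‖r • v‖ = 2 := by
      rw [norm_smul, Real.norm_eq_abs, hr, div_mul_cancel₀ _ (norm_ne_zero_iff.2 hv)]
    have := norm_sub_le (a + r • v) a
    rw [add_sub_cancel_left] at this
    linarith
  obtain ⟨s, hs, hs1⟩ := intermediate_value_Icc' (neg_nonpos.2 hT.le) hcont.continuousOn
    ⟨h0, hfar (-T) (by rw [abs_neg, abs_of_pos hT])⟩
  obtain ⟨t, ht, ht1⟩ := intermediate_value_Icc hT.le hcont.continuousOn
    ⟨h0, hfar T (abs_of_pos hT)⟩
  refine ⟨s, t, hs1, ht1, ?_⟩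
  have hmem : (0 : X) ∈ segment ℝ (s • v) (t • v) := by
    have := image_segment ℝ (LinearMap.toSpanSingleton ℝ X v).toAffineMap s t
    simp only [LinearMap.coe_toAffineMap, LinearMap.toSpanSingleton_apply] at this
    rw [← this, segment_eq_Icc (hs.2.trans ht.1)]
    exact ⟨0, ⟨hs.2, ht.1⟩, zero_smul ℝ v⟩
  simpa using (mem_segment_translate ℝ a).2 hmem

theorem relWeakOpen_closedBall_inter_preimage {m : ℕ} (f : Fin m → X →L[ℝ] ℝ)
    {O : Set (Fin m → ℝ)} (hO : IsOpen O) :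
    RelWeakOpen (closedBall 0 1 ∩ ContinuousLinearMap.pi f ⁻¹' O) := by
  refine ⟨inter_subset_left, fun b hb => ?_⟩
  obtain ⟨η, hη, hball⟩ := Metric.isOpen_iff.1 hO _ hb.2
  refine ⟨m, f, η, hη, fun c hc hcf => ⟨hc, hball ((dist_pi_lt_iff hη).2 fun j => ?_)⟩⟩
  simpa [Real.dist_eq] using hcf j

theorem RelWeakOpen.exists_convex_subset {U : Set X} (hU : RelWeakOpen U) {a : X} (ha : a ∈ U) :
    ∃ V ⊆ U, a ∈ V ∧ RelWeakOpen V ∧ Convex ℝ V := by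
  obtain ⟨m, f, δ, hδ, hf⟩ := hU.2 a ha
  set O : Set (Fin m → ℝ) := univ.pi fun j => ball (f j a) δ
  refine ⟨closedBall 0 1 ∩ ContinuousLinearMap.pi f ⁻¹' O, fun b hb => ?_, ⟨hU.1 ha, ?_⟩,
    relWeakOpen_closedBall_inter_preimage f (isOpen_set_pi finite_univ fun _ _ => isOpen_ball),
    (convex_closedBall 0 1).inter ((convex_pi fun _ _ => convex_ball _ _).linear_preimage
      (ContinuousLinearMap.pi f : X →ₗ[ℝ] Fin m → ℝ))⟩
  · exact hf b hb.1 fun j => by simpa [O, Real.dist_eq] using hb.2 j (mem_univ j)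
  · simpa [O] using fun _ => hδ

theorem RelWeakOpen.exists_mem_sphere_segment (hX : ¬ FiniteDimensional ℝ X) {U : Set X}
    (hU : RelWeakOpen U) {a : X} (ha : a ∈ U) :
    ∃ y ∈ sphere 0 1 ∩ U, ∃ z ∈ sphere 0 1 ∩ U, a ∈ segment ℝ y z := by
  obtain ⟨m, f, δ, hδ, hf⟩ := hU.2 a ha
  obtain ⟨v, hv, hfv⟩ : ∃ v ≠ 0, ∀ j, f j v = 0 :=
    exists_ne_zero_forall_eq_zero_of_not_finiteDimensional hX fun j => (f j : X →ₗ[ℝ] ℝ)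
  have hline : ∀ r : ℝ, ‖a + r • v‖ = 1 → a + r • v ∈ sphere 0 1 ∩ U := fun r hr =>
    ⟨mem_sphere_zero_iff_norm.2 hr, hf _ (mem_closedBall_zero_iff.2 hr.le) fun j => by
      simpa [hfv j] using hδ⟩
  obtain ⟨s, t, hs, ht, hmem⟩ :=
    exists_norm_add_smul_eq_one_mem_segment (mem_closedBall_zero_iff.1 (hU.1 ha)) hv
  exact ⟨_, hline s hs, _, hline t ht, hmem⟩

theorem forall_fin_append_iff {α : Type*} {m n : ℕ} {P : α → Prop} {f : Fin m → α}
    {g : Fin n → α} : (∀ k, P (Fin.append f g k)) ↔ (∀ i, P (f i)) ∧ ∀ i, P (g i) := by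
  simp only [Fin.forall_fin_add, Fin.append_left, Fin.append_right]

theorem combo_mono {n : ℕ} {lam : Fin n → ℝ} {U V : Fin n → Set X} (hUV : ∀ i, U i ⊆ V i) :
    combo lam U ⊆ combo lam V := fun _ ⟨u, hu, hw⟩ => ⟨u, fun i => hUV i (hu i), hw⟩

theorem sum_append_mul_smul_append {n : ℕ} (lam μ ν : Fin n → ℝ) (y z : Fin n → X) :
    ∑ k, Fin.append (lam * μ) (lam * ν) k • Fin.append y z k =
      ∑ i, lam i • (μ i • y i + ν i • z i) := by
  simp only [Fin.sum_univ_add, Fin.append_left, Fin.append_right, Pi.mul_apply, mul_smul,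
    ← Finset.sum_add_distrib, smul_add]

theorem combo_append_subset {n : ℕ} {lam μ ν : Fin n → ℝ} {V : Fin n → Set X}
    (hV : ∀ i, Convex ℝ (V i)) (hμ : ∀ i, 0 ≤ μ i) (hν : ∀ i, 0 ≤ ν i)
    (hμν : ∀ i, μ i + ν i = 1) :
    combo (Fin.append (lam * μ) (lam * ν)) (Fin.append V V) ⊆ combo lam V := by
  rintro _ ⟨u, hu, rfl⟩
  rw [Fin.forall_fin_add] at hu
  simp only [Fin.append_left, Fin.append_right] at hu
  refine ⟨fun i => μ i • u (Fin.castAdd n i) + ν i • u (Fin.natAdd n i),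
    fun i => hV i (hu.1 i) (hu.2 i) (hμ i) (hν i) (hμν i), ?_⟩
  rw [← sum_append_mul_smul_append]
  simp only [Fin.sum_univ_add, Fin.append_left, Fin.append_right]

end

theorem stmt7_general (X : Type*) [NormedAddCommGroup X] [NormedSpace ℝ X]
    (hX : ¬ FiniteDimensional ℝ X)
    (h : ∀ (n : ℕ) (U : Fin n → Set X), (∀ i, (U i).Nonempty) → (∀ i, RelWeakOpen (U i)) →
      (∀ i, Convex ℝ (U i)) →
      ∀ lam : Fin n → ℝ, (∀ i, lam i ∈ Set.Icc (0 : ℝ) 1) → ∑ i, lam i = 1 →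
      ∀ xi : Fin n → X, (∀ i, xi i ∈ Metric.sphere (0 : X) 1 ∩ U i) →
      ∀ ε > (0 : ℝ), ∃ u ∈ combo lam U, ‖(∑ i, lam i • xi i) - u‖ ≥ ‖∑ i, lam i • xi i‖ + 1 - ε) :
    DSD2P X := by
  rintro n U - hU lam hlam hsum _ ⟨a, ha, rfl⟩ ε hε
  choose V hVU haV hVopen hVconv using fun i => (hU i).exists_convex_subset (ha i)
  choose y hy z hz μ ν hμ hν hμν hyz using
    fun i => (hVopen i).exists_mem_sphere_segment hX (haV i)
  have hμ1 : ∀ i, μ i ∈ Icc (0 : ℝ) 1 := fun i => ⟨hμ i, by linarith [hν i, hμν i]⟩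
  have hν1 : ∀ i, ν i ∈ Icc (0 : ℝ) 1 := fun i => ⟨hν i, by linarith [hμ i, hμν i]⟩
  have hsum' : ∑ k, Fin.append (lam * μ) (lam * ν) k = 1 := by
    simp only [Fin.sum_univ_add, Fin.append_left, Fin.append_right, Pi.mul_apply,
      ← Finset.sum_add_distrib, ← mul_add, hμν, mul_one, hsum]
  obtain ⟨u, hu, hdist⟩ := h (n + n) (Fin.append V V)
    (forall_fin_append_iff.2 ⟨fun i => ⟨a i, haV i⟩, fun i => ⟨a i, haV i⟩⟩)
    (forall_fin_append_iff.2 ⟨hVopen, hVopen⟩) (forall_fin_append_iff.2 ⟨hVconv, hVconv⟩)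
    (Fin.append (lam * μ) (lam * ν))
    (forall_fin_append_iff.2 ⟨fun i => unitInterval.mul_mem (hlam i) (hμ1 i),
      fun i => unitInterval.mul_mem (hlam i) (hν1 i)⟩)
    hsum' (Fin.append y z) ((Fin.forall_fin_add _).2
      ⟨fun i => by simpa only [Fin.append_left] using hy i,
        fun i => by simpa only [Fin.append_right] using hz i⟩) ε hε
  rw [sum_append_mul_smul_append] at hdist
  simp only [hyz] at hdist
  exact ⟨u, combo_mono hVU (combo_append_subset hVconv hμ hν hμν hu), hdist⟩

/-- If an infinite-dimensional Banach space satisfies the DSD2P condition for convex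
relatively weakly open sets and points `x = ∑ λᵢ xᵢ` with `xᵢ ∈ S_X ∩ Uᵢ`, then it has
the full DSD2P. -/
theorem stmt7 (X : Type*) [NormedAddCommGroup X] [NormedSpace ℝ X] [CompleteSpace X]
    (hX : ¬ FiniteDimensional ℝ X)
    (h : ∀ (n : ℕ) (U : Fin n → Set X), (∀ i, (U i).Nonempty) → (∀ i, RelWeakOpen (U i)) →
      (∀ i, Convex ℝ (U i)) →
      ∀ lam : Fin n → ℝ, (∀ i, lam i ∈ Set.Icc (0 : ℝ) 1) → ∑ i, lam i = 1 →
      ∀ xi : Fin n → X, (∀ i, xi i ∈ Metric.sphere (0 : X) 1 ∩ U i) →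
      ∀ ε > (0 : ℝ), ∃ u ∈ combo lam U, ‖(∑ i, lam i • xi i) - u‖ ≥ ‖∑ i, lam i • xi i‖ + 1 - ε) :
    DSD2P X :=
  stmt7_general X hX h
end
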